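/- A subset I of the set of long positive roots {e_i − e_j, e_i + e_j : 1 ≤ i < j ≤ 4} of F_4 is a combinatorial abelian ideal if and only if I is one of the four sets: ∅, {e_1 + e_2}, {e_1 + e_2, e_1 + e_3}, {e_1 + e_2, e_1 + e_3, e_1 + e_4}. -/
import Mathlib


/-- The `i`-th standard basis vector of `ℝ⁴`. -/
noncomputable def e (i : Fin 4) : Fin 4 → ℝ := fun j => if j = i then 1 else 0

/-- The positive roots of the root system `F_4`. -/
def PosF : Set (Fin 4 → ℝ) :=
  {v | (∃ i : Fin 4, v = e i) ∨
       (∃ i j : Fin 4, i < j ∧ (v = e i - e j ∨ v = e i + e j)) ∨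
       (∃ s₂ s₃ s₄ : ℝ, (s₂ = 1 ∨ s₂ = -1) ∧ (s₃ = 1 ∨ s₃ = -1) ∧ (s₄ = 1 ∨ s₄ = -1) ∧
          v = (1 / 2 : ℝ) • (e 0 + s₂ • e 1 + s₃ • e 2 + s₄ • e 3))}

/-- All roots of `F_4`. -/
def DeltaF : Set (Fin 4 → ℝ) := PosF ∪ {v | -v ∈ PosF}

/-- The long positive roots of `F_4`. -/
def LongPosF : Set (Fin 4 → ℝ) :=
  {v | ∃ i j : Fin 4, i < j ∧ (v = e i - e j ∨ v = e i + e j)}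

/-- `I` is a combinatorial abelian ideal with respect to the root system `Δ`
with positive system `Δ⁺`. -/
def IsAbelianIdeal {V : Type*} [Add V] (Δ Δp : Set V) (I : Set V) : Prop :=
  I ⊆ Δp ∧ (∀ μ ∈ I, ∀ ν ∈ I, μ + ν ∉ Δ) ∧
    (∀ γ ∈ I, ∀ ν ∈ Δp, γ + ν ∈ Δ → γ + ν ∈ I)

set_option linter.unusedTactic false

/-- Sum of squares of the coordinates. -/
def norm2 (v : Fin 4 → ℝ) : ℝ := v 0 ^ 2 + v 1 ^ 2 + v 2 ^ 2 + v 3 ^ 2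

lemma ei_norm (i : Fin 4) : norm2 (e i) = 1 := by
  fin_cases i <;> norm_num (config := { decide := true }) [norm2, e]

lemma pos_coord0 (v : Fin 4 → ℝ) (h : v ∈ PosF) : 0 ≤ v 0 ∧ v 0 ≤ 1 := by
  rcases h with ⟨i, rfl⟩ | ⟨i, j, hij, rfl | rfl⟩ | ⟨s₂, s₃, s₄, hs2, hs3, hs4, rfl⟩
  · fin_cases i <;> norm_num (config := { decide := true }) [e]
  · fin_cases i <;> fin_cases j <;>
      first
      | (refine absurd hij ?_; decide)
      | norm_num (config := { decide := true }) [e]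
  · fin_cases i <;> fin_cases j <;>
      first
      | (refine absurd hij ?_; decide)
      | norm_num (config := { decide := true }) [e]
  · norm_num (config := { decide := true }) [e]

lemma pos_norm (v : Fin 4 → ℝ) (h : v ∈ PosF) : norm2 v = 1 ∨ norm2 v = 2 := by
  rcases h with ⟨i, rfl⟩ | ⟨i, j, hij, rfl | rfl⟩ | ⟨s₂, s₃, s₄, hs2, hs3, hs4, rfl⟩
  · exact Or.inl (ei_norm i)
  · right; fin_cases i <;> fin_cases j <;>
      first
      | (refine absurd hij ?_; decide)
      | norm_num (config := { decide := true }) [norm2, e]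
  · right; fin_cases i <;> fin_cases j <;>
      first
      | (refine absurd hij ?_; decide)
      | norm_num (config := { decide := true }) [norm2, e]
  · left
    rcases hs2 with rfl | rfl <;> rcases hs3 with rfl | rfl <;> rcases hs4 with rfl | rfl <;>
      norm_num (config := { decide := true }) [norm2, e]

lemma root_coord0 (v : Fin 4 → ℝ) (h : v ∈ DeltaF) : v 0 ≤ 1 := by
  rcases h with h | h
  · exact (pos_coord0 v h).2
  · have := (pos_coord0 _ h).1
    simp only [Pi.neg_apply] at this
    linarith

lemma root_norm (v : Fin 4 → ℝ) (h : v ∈ DeltaF) : norm2 v = 1 ∨ norm2 v = 2 := by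
  rcases h with h | h
  · exact pos_norm v h
  · have := pos_norm _ h
    simpa [norm2] using this

lemma long_norm (v : Fin 4 → ℝ) (h : v ∈ LongPosF) : norm2 v = 2 := by
  obtain ⟨i, j, hij, rfl | rfl⟩ := h <;>
    fin_cases i <;> fin_cases j <;>
      first
      | (refine absurd hij ?_; decide)
      | norm_num (config := { decide := true }) [norm2, e]

lemma key (i : Fin 4) (hi : i ≠ 0) (ν : Fin 4 → ℝ) (hν : ν ∈ PosF)
    (h : e 0 + e i + ν ∈ DeltaF) :
    ∃ k : Fin 4, 0 < k ∧ k < i ∧ e 0 + e i + ν = e 0 + e k := by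
  have h0 : ν 0 = 0 := by
    have h1 := root_coord0 _ h
    have h2 := (pos_coord0 _ hν).1
    have h3 : (e 0 + e i + ν) 0 = 1 + ν 0 := by
      simp [e, (Ne.symm hi : (0 : Fin 4) ≠ i)]
    rw [h3] at h1; linarith
  have hn := root_norm _ h
  rcases hν with ⟨m, rfl⟩ | ⟨m, l, hml, rfl | rfl⟩ | ⟨s₂, s₃, s₄, hs2, hs3, hs4, rfl⟩
  · exfalso
    fin_cases i <;> fin_cases m <;>
      first
      | exact hi rfl
      | (refine absurd hn ?_; norm_num (config := { decide := true }) [norm2, e]; done)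
  · fin_cases i <;> fin_cases m <;> fin_cases l <;>
      first
      | exact absurd rfl hi
      | (refine absurd hml ?_; decide)
      | (refine absurd h0 ?_; norm_num (config := { decide := true }) [e]; done)
      | (refine ⟨1, ?_, ?_, ?_⟩ <;> first | decide | (abel; done))
      | (refine ⟨2, ?_, ?_, ?_⟩ <;> first | decide | (abel; done))
      | (refine absurd hn ?_; norm_num (config := { decide := true }) [norm2, e]; done)
  · exfalso
    fin_cases i <;> fin_cases m <;> fin_cases l <;>
      first
      | exact hi rfl
      | (refine absurd hml ?_; decide)
      | (refine absurd h0 ?_; norm_num (config := { decide := true }) [e]; done)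
      | (refine absurd hn ?_; norm_num (config := { decide := true }) [norm2, e]; done)
  · refine absurd h0 ?_; norm_num (config := { decide := true }) [e]

lemma half_mem (s₂ s₃ s₄ : ℝ) (h2 : s₂ = 1 ∨ s₂ = -1) (h3 : s₃ = 1 ∨ s₃ = -1)
    (h4 : s₄ = 1 ∨ s₄ = -1) :
    (1 / 2 : ℝ) • (e 0 + s₂ • e 1 + s₃ • e 2 + s₄ • e 3) ∈ PosF :=
  Or.inr (Or.inr ⟨s₂, s₃, s₄, h2, h3, h4, rfl⟩)

lemma mem_a : e 0 + e 1 ∈ PosF := Or.inr (Or.inl ⟨0, 1, by decide, Or.inr rfl⟩)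
lemma mem_b : e 0 + e 2 ∈ PosF := Or.inr (Or.inl ⟨0, 2, by decide, Or.inr rfl⟩)
lemma mem_c : e 0 + e 3 ∈ PosF := Or.inr (Or.inl ⟨0, 3, by decide, Or.inr rfl⟩)

lemma sum2_not_root (i j : Fin 4) (hi : i ≠ 0) (hj : j ≠ 0) :
    (e 0 + e i) + (e 0 + e j) ∉ DeltaF := by
  intro h
  have h1 := root_coord0 _ h
  have h2 : ((e 0 + e i) + (e 0 + e j)) 0 = 2 := by
    simp [e, (Ne.symm hi : (0 : Fin 4) ≠ i), (Ne.symm hj : (0 : Fin 4) ≠ j)]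
    norm_num
  rw [h2] at h1; norm_num at h1

/-- A long positive root `e i + e j` with `i ≠ 0` cannot belong to an abelian ideal contained
in the long positive roots. -/
lemma not_high (I : Set (Fin 4 → ℝ)) (hI : I ⊆ LongPosF)
    (hid : ∀ γ ∈ I, ∀ ν ∈ PosF, γ + ν ∈ DeltaF → γ + ν ∈ I)
    (i j : Fin 4) (hij : i < j) (hi : i ≠ 0) : e i + e j ∉ I := by
  intro hv
  have hcase := (show ∀ i j : Fin 4, i < j → i ≠ 0 →
      (i = 1 ∧ j = 2) ∨ (i = 1 ∧ j = 3) ∨ (i = 2 ∧ j = 3) by decide) i j hij hi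
  have hw : (1 / 2 : ℝ) • (e 0 + (1 : ℝ) • e 1 + (1 : ℝ) • e 2 + (1 : ℝ) • e 3) ∈ PosF :=
    half_mem _ _ _ (by norm_num) (by norm_num) (by norm_num)
  have hwn : norm2 ((1 / 2 : ℝ) • (e 0 + (1 : ℝ) • e 1 + (1 : ℝ) • e 2 + (1 : ℝ) • e 3)) = 1 := by
    norm_num (config := { decide := true }) [norm2, e]
  rcases hcase with ⟨rfl, rfl⟩ | ⟨rfl, rfl⟩ | ⟨rfl, rfl⟩
  · have hν : (1 / 2 : ℝ) • (e 0 + (-1 : ℝ) • e 1 + (-1 : ℝ) • e 2 + (1 : ℝ) • e 3) ∈ PosF :=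
      half_mem _ _ _ (by norm_num) (by norm_num) (by norm_num)
    have heq : e 1 + e 2 + (1 / 2 : ℝ) • (e 0 + (-1 : ℝ) • e 1 + (-1 : ℝ) • e 2 + (1 : ℝ) • e 3)
        = (1 / 2 : ℝ) • (e 0 + (1 : ℝ) • e 1 + (1 : ℝ) • e 2 + (1 : ℝ) • e 3) := by module
    have hmem := hid _ hv _ hν (by rw [heq]; exact Or.inl hw)
    rw [heq] at hmem
    have := long_norm _ (hI hmem)
    rw [hwn] at this; norm_num at this
  · have hν : (1 / 2 : ℝ) • (e 0 + (-1 : ℝ) • e 1 + (1 : ℝ) • e 2 + (-1 : ℝ) • e 3) ∈ PosF :=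
      half_mem _ _ _ (by norm_num) (by norm_num) (by norm_num)
    have heq : e 1 + e 3 + (1 / 2 : ℝ) • (e 0 + (-1 : ℝ) • e 1 + (1 : ℝ) • e 2 + (-1 : ℝ) • e 3)
        = (1 / 2 : ℝ) • (e 0 + (1 : ℝ) • e 1 + (1 : ℝ) • e 2 + (1 : ℝ) • e 3) := by module
    have hmem := hid _ hv _ hν (by rw [heq]; exact Or.inl hw)
    rw [heq] at hmem
    have := long_norm _ (hI hmem)
    rw [hwn] at this; norm_num at this
  · have hν : (1 / 2 : ℝ) • (e 0 + (1 : ℝ) • e 1 + (-1 : ℝ) • e 2 + (-1 : ℝ) • e 3) ∈ PosF :=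
      half_mem _ _ _ (by norm_num) (by norm_num) (by norm_num)
    have heq : e 2 + e 3 + (1 / 2 : ℝ) • (e 0 + (1 : ℝ) • e 1 + (-1 : ℝ) • e 2 + (-1 : ℝ) • e 3)
        = (1 / 2 : ℝ) • (e 0 + (1 : ℝ) • e 1 + (1 : ℝ) • e 2 + (1 : ℝ) • e 3) := by module
    have hmem := hid _ hv _ hν (by rw [heq]; exact Or.inl hw)
    rw [heq] at hmem
    have := long_norm _ (hI hmem)
    rw [hwn] at this; norm_num at this

/-- A subset of the long positive roots of `F_4` is a combinatorial abelian ideal iff it is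
one of `∅`, `{e₁+e₂}`, `{e₁+e₂, e₁+e₃}`, `{e₁+e₂, e₁+e₃, e₁+e₄}`. -/
theorem long_abelian_ideals_F4_classification (I : Set (Fin 4 → ℝ)) (hI : I ⊆ LongPosF) :
    IsAbelianIdeal DeltaF PosF I ↔
      (I = ∅ ∨ I = {e 0 + e 1} ∨ I = {e 0 + e 1, e 0 + e 2} ∨
        I = {e 0 + e 1, e 0 + e 2, e 0 + e 3}) := by
  constructor
  · rintro ⟨hsub, hab, hid⟩
    -- every element of `I` is one of `e 0 + e j`, `j = 1, 2, 3`
    have hmem : ∀ v ∈ I, v = e 0 + e 1 ∨ v = e 0 + e 2 ∨ v = e 0 + e 3 := by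
      intro v hv
      obtain ⟨i, j, hij, hd⟩ := hI hv
      rcases hd with rfl | rfl
      · exfalso
        have heq : e i - e j + e j = e i := by abel
        have hm : e i - e j + e j ∈ I :=
          hid _ hv (e j) (Or.inl ⟨j, rfl⟩) (by rw [heq]; exact Or.inl (Or.inl ⟨i, rfl⟩))
        rw [heq] at hm
        have h2 := long_norm _ (hI hm)
        rw [ei_norm] at h2; norm_num at h2
      · by_cases hi0 : i = 0
        · subst hi0
          have hj := (show ∀ j : Fin 4, (0 : Fin 4) < j → j = 1 ∨ j = 2 ∨ j = 3 by decide) j hij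
          rcases hj with rfl | rfl | rfl
          · exact Or.inl rfl
          · exact Or.inr (Or.inl rfl)
          · exact Or.inr (Or.inr rfl)
        · exact absurd hv (not_high I hI hid i j hij hi0)
    -- downward closedness
    have hcb : e 0 + e 3 ∈ I → e 0 + e 2 ∈ I := by
      intro hc
      have heq : e 0 + e 3 + (e 2 - e 3) = e 0 + e 2 := by abel
      have hm23 : e 2 - e 3 ∈ PosF := Or.inr (Or.inl ⟨2, 3, by decide, Or.inl rfl⟩)
      have := hid _ hc _ hm23 (by rw [heq]; exact Or.inl mem_b)
      rwa [heq] at this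
    have hba : e 0 + e 2 ∈ I → e 0 + e 1 ∈ I := by
      intro hb
      have heq : e 0 + e 2 + (e 1 - e 2) = e 0 + e 1 := by abel
      have hm12 : e 1 - e 2 ∈ PosF := Or.inr (Or.inl ⟨1, 2, by decide, Or.inl rfl⟩)
      have := hid _ hb _ hm12 (by rw [heq]; exact Or.inl mem_a)
      rwa [heq] at this
    by_cases hc : e 0 + e 3 ∈ I
    · right; right; right
      refine Set.Subset.antisymm ?_ ?_
      · intro x hx
        rcases hmem x hx with rfl | rfl | rfl
        · exact Set.mem_insert _ _
        · exact Set.mem_insert_of_mem _ (Set.mem_insert _ _)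
        · exact Set.mem_insert_of_mem _ (Set.mem_insert_of_mem _ rfl)
      · intro x hx
        simp only [Set.mem_insert_iff, Set.mem_singleton_iff] at hx
        rcases hx with rfl | rfl | rfl
        · exact hba (hcb hc)
        · exact hcb hc
        · exact hc
    · by_cases hb : e 0 + e 2 ∈ I
      · right; right; left
        refine Set.Subset.antisymm ?_ ?_
        · intro x hx
          rcases hmem x hx with rfl | rfl | rfl
          · exact Set.mem_insert _ _
          · exact Set.mem_insert_of_mem _ rfl
          · exact absurd hx hc
        · intro x hx
          simp only [Set.mem_insert_iff, Set.mem_singleton_iff] at hx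
          rcases hx with rfl | rfl
          · exact hba hb
          · exact hb
      · by_cases ha : e 0 + e 1 ∈ I
        · right; left
          refine Set.Subset.antisymm ?_ ?_
          · intro x hx
            rcases hmem x hx with rfl | rfl | rfl
            · rfl
            · exact absurd hx hb
            · exact absurd hx hc
          · intro x hx
            rw [Set.mem_singleton_iff] at hx
            subst hx; exact ha
        · left
          refine Set.eq_empty_iff_forall_notMem.mpr ?_
          intro x hx
          rcases hmem x hx with rfl | rfl | rfl
          · exact ha hx
          · exact hb hx
          · exact hc hx
  · -- the four sets are abelian ideals
    have habel : ∀ (S : Set (Fin 4 → ℝ)),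
        S ⊆ {e 0 + e 1, e 0 + e 2, e 0 + e 3} → ∀ μ ∈ S, ∀ ν ∈ S, μ + ν ∉ DeltaF := by
      intro S hS μ hμ ν hν
      have hμ' := hS hμ
      have hν' := hS hν
      simp only [Set.mem_insert_iff, Set.mem_singleton_iff] at hμ' hν'
      rcases hμ' with rfl | rfl | rfl <;> rcases hν' with rfl | rfl | rfl <;>
        exact sum2_not_root _ _ (by decide) (by decide)
    rintro (rfl | rfl | rfl | rfl)
    · exact ⟨Set.empty_subset _, fun μ hμ => absurd hμ (Set.notMem_empty μ),
        fun γ hγ => absurd hγ (Set.notMem_empty γ)⟩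
    · have hsing : ({e 0 + e 1} : Set (Fin 4 → ℝ)) ⊆ {e 0 + e 1, e 0 + e 2, e 0 + e 3} := by
        intro x hx
        rw [Set.mem_singleton_iff] at hx
        subst hx
        exact Set.mem_insert _ _
      refine ⟨?_, habel _ hsing, ?_⟩
      · intro x hx
        rw [Set.mem_singleton_iff] at hx
        subst hx
        exact mem_a
      · intro γ hγ ν hν hmem
        rw [Set.mem_singleton_iff] at hγ; subst hγ
        obtain ⟨k, hk0, hk1, heq⟩ := key 1 (by decide) ν hν hmem
        exact absurd ⟨hk0, hk1⟩
          ((show ∀ k : Fin 4, ¬(0 < k ∧ k < 1) by decide) k)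
    · refine ⟨?_, habel _ ?_, ?_⟩
      · intro x hx
        simp only [Set.mem_insert_iff, Set.mem_singleton_iff] at hx
        rcases hx with rfl | rfl
        · exact mem_a
        · exact mem_b
      · intro x hx
        simp only [Set.mem_insert_iff, Set.mem_singleton_iff] at hx
        rcases hx with rfl | rfl
        · exact Set.mem_insert _ _
        · exact Set.mem_insert_of_mem _ (Set.mem_insert _ _)
      · intro γ hγ ν hν hmem
        simp only [Set.mem_insert_iff, Set.mem_singleton_iff] at hγ
        rcases hγ with rfl | rfl
        · obtain ⟨k, hk0, hk1, heq⟩ := key 1 (by decide) ν hν hmem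
          exact absurd ⟨hk0, hk1⟩
            ((show ∀ k : Fin 4, ¬(0 < k ∧ k < 1) by decide) k)
        · obtain ⟨k, hk0, hk1, heq⟩ := key 2 (by decide) ν hν hmem
          have hk : k = 1 :=
            (show ∀ k : Fin 4, 0 < k → k < 2 → k = 1 by decide) k hk0 hk1
          subst hk
          rw [heq]
          exact Set.mem_insert _ _
    · refine ⟨?_, habel _ le_rfl, ?_⟩
      · intro x hx
        simp only [Set.mem_insert_iff, Set.mem_singleton_iff] at hx
        rcases hx with rfl | rfl | rfl
        · exact mem_a
        · exact mem_b
        · exact mem_c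
      · intro γ hγ ν hν hmem
        simp only [Set.mem_insert_iff, Set.mem_singleton_iff] at hγ
        rcases hγ with rfl | rfl | rfl
        · obtain ⟨k, hk0, hk1, heq⟩ := key 1 (by decide) ν hν hmem
          exact absurd ⟨hk0, hk1⟩
            ((show ∀ k : Fin 4, ¬(0 < k ∧ k < 1) by decide) k)
        · obtain ⟨k, hk0, hk1, heq⟩ := key 2 (by decide) ν hν hmem
          have hk : k = 1 :=
            (show ∀ k : Fin 4, 0 < k → k < 2 → k = 1 by decide) k hk0 hk1
          subst hk
          rw [heq]
          exact Set.mem_insert _ _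
        · obtain ⟨k, hk0, hk1, heq⟩ := key 3 (by decide) ν hν hmem
          have hk : k = 1 ∨ k = 2 :=
            (show ∀ k : Fin 4, 0 < k → k < 3 → k = 1 ∨ k = 2 by decide) k hk0 hk1
          rcases hk with rfl | rfl
          · rw [heq]; exact Set.mem_insert _ _
          · rw [heq]; exact Set.mem_insert_of_mem _ (Set.mem_insert _ _)
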